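/- arXiv:2211.10203 — 2 statements merged into one kernel-verified Lean document; each statement's English description precedes it below -/
import Mathlib

section
/- Let p ≥ M ≥ 1, let U be a real p×M matrix with orthonormal columns (UᵀU = I_M), let Λ be an M×M diagonal matrix with nonnegative diagonal entries, let c > 0 and a ≥ 0, and let Σ̄ be a p×p real symmetric positive semidefinite matrix. Then tr((c·I_p + a·U Λ Uᵀ)^{−1/2}·Σ̄) ≥ c^{−1/2}·(tr(Σ̄) − tr(Uᵀ Σ̄ U)) ≥ c^{−1/2}·(tr(Σ̄) − M·‖Σ̄‖). -/
open Matrix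
open scoped Matrix.Norms.L2Operator

/-- The positive semidefinite square root of a real matrix (zero junk value when the matrix
is not positive semidefinite). -/
noncomputable def matSqrt {n : Type*} [Fintype n] [DecidableEq n]
    (A : Matrix n n ℝ) : Matrix n n ℝ :=
  letI := Classical.propDecidable
  if h : A.PosSemidef then
    h.isHermitian.eigenvectorUnitary.1 * diagonal ((↑) ∘ Real.sqrt ∘ h.isHermitian.eigenvalues) *
      (star h.isHermitian.eigenvectorUnitary : Matrix n n ℝ) else 0

/-- `A^{−1/2}`: the inverse of the positive semidefinite square root. -/
noncomputable def matInvSqrt {n : Type*} [Fintype n] [DecidableEq n]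
    (A : Matrix n n ℝ) : Matrix n n ℝ :=
  (matSqrt A)⁻¹

/-!
With `P = U Uᵀ` the orthogonal projection onto the column space of `U`, the matrix
`c I + a U Λ Uᵀ` equals `c (I - P) + U (c I + a Λ) Uᵀ`. Matrices of the form
`r (I - P) + U diag(f) Uᵀ` multiply blockwise, so the inverse square root is
`c^{-1/2} (I - P) + U diag((c + a λᵢ)^{-1/2}) Uᵀ`. Its trace against `Σ̄` is
`c^{-1/2} (tr Σ̄ - tr (Uᵀ Σ̄ U))` plus the trace of a nonnegative diagonal matrix times the
positive semidefinite `Uᵀ Σ̄ U`, which is nonnegative. For the second inequality, `Uᵀ Σ̄ U` has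
operator norm at most `‖Σ̄‖`, and every diagonal entry is bounded by the operator norm.
-/

lemma matSqrt_eq_of_mul_self {n : Type*} [Fintype n] [DecidableEq n] {A S : Matrix n n ℝ}
    (hA : A.PosSemidef) (hS : S.PosSemidef) (hSS : S * S = A) : matSqrt A = S := by
  rw [matSqrt, dif_pos hA]
  -- `matSqrt` uses the classical decidability instance; the `cfc` lemmas need it to be ambient.
  obtain rfl : ‹DecidableEq n› = (fun a b => Classical.propDecidable (a = b)) :=
    Subsingleton.elim _ _
  let _ : DecidableEq n := fun a b => Classical.propDecidable (a = b)
  open scoped MatrixOrder in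
  calc _ = cfc Real.sqrt A := by
        have h := hA.isHermitian.cfc_eq Real.sqrt
        rw [IsHermitian.cfc, Unitary.conjStarAlgAut_apply] at h
        exact h.symm
    _ = S := by
        rw [← cfcₙ_eq_cfc (hf0 := Real.sqrt_zero), ← CFC.sqrt_eq_real_sqrt A hA.nonneg]
        exact CFC.sqrt_unique hSS hS.nonneg

section Norm

variable {𝕜 m n : Type*} [RCLike 𝕜] [Fintype m] [Fintype n]

lemma Matrix.norm_apply_le_l2_opNorm [DecidableEq n] (A : Matrix m n 𝕜) (i : m) (j : n) :
    ‖A i j‖ ≤ ‖A‖ := by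
  have h := A.l2_opNorm_mulVec (WithLp.toLp 2 (Pi.single j 1))
  calc ‖A i j‖ = ‖((EuclideanSpace.equiv m 𝕜).symm (A *ᵥ Pi.single j 1)) i‖ := by
        simp [mulVec_single]
    _ ≤ ‖(EuclideanSpace.equiv m 𝕜).symm (A *ᵥ Pi.single j 1)‖ := PiLp.norm_apply_le _ _
    _ ≤ ‖A‖ := by simpa using h

lemma Matrix.trace_le_card_mul_l2_opNorm [DecidableEq n] (A : Matrix n n ℝ) :
    A.trace ≤ Fintype.card n * ‖A‖ := by
  calc A.trace = ∑ i, A i i := rfl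
    _ ≤ ∑ _i : n, ‖A‖ := Finset.sum_le_sum fun i _ =>
        (Real.le_norm_self _).trans (A.norm_apply_le_l2_opNorm i i)
    _ = Fintype.card n * ‖A‖ := by simp

lemma Matrix.l2_opNorm_le_one_of_conjTranspose_mul_self [DecidableEq n] {U : Matrix m n 𝕜}
    (hU : Uᴴ * U = 1) : ‖U‖ ≤ 1 := by
  have h : ‖U‖ * ‖U‖ ≤ 1 := by
    rw [← l2_opNorm_conjTranspose_mul_self, hU, ← l2_opNorm_toEuclideanCLM, map_one]
    exact ContinuousLinearMap.norm_id_le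
  nlinarith [norm_nonneg U]

lemma Matrix.trace_transpose_mul_mul_le [DecidableEq m] [DecidableEq n] {U : Matrix n m ℝ}
    (hU : Uᵀ * U = 1) (S : Matrix n n ℝ) :
    (Uᵀ * S * U).trace ≤ Fintype.card m * ‖S‖ := by
  have hU' : ‖U‖ ≤ 1 := l2_opNorm_le_one_of_conjTranspose_mul_self hU
  have hUt : ‖Uᵀ‖ ≤ 1 := by rwa [← conjTranspose_eq_transpose_of_trivial, l2_opNorm_conjTranspose]
  have hnorm : ‖Uᵀ * S * U‖ ≤ ‖S‖ :=
    calc ‖Uᵀ * S * U‖ ≤ ‖Uᵀ‖ * ‖S‖ * ‖U‖ :=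
          (l2_opNorm_mul _ _).trans (by gcongr; exact l2_opNorm_mul _ _)
      _ ≤ 1 * ‖S‖ * 1 := by gcongr
      _ = ‖S‖ := by ring
  exact (trace_le_card_mul_l2_opNorm _).trans (by gcongr)

end Norm

section ColSpaceDiag

variable {R m n : Type*} [Fintype m] [DecidableEq m] [DecidableEq n]

/-- When `U` has orthonormal columns, this is the symmetric matrix acting as `diagonal f` on the
column space of `U` (in the basis of its columns) and as `r` on its orthogonal complement. -/
def colSpaceDiag [CommRing R] (U : Matrix n m R) (r : R) (f : m → R) : Matrix n n R :=
  r • (1 - U * Uᵀ) + U * diagonal f * Uᵀ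

section CommRing

variable [CommRing R] {U : Matrix n m R}

lemma one_sub_mul_transpose_mul_self [Fintype n] (hU : Uᵀ * U = 1) : (1 - U * Uᵀ) * U = 0 := by
  rw [Matrix.sub_mul, Matrix.one_mul, Matrix.mul_assoc, hU, Matrix.mul_one, sub_self]

lemma transpose_mul_one_sub_mul_transpose [Fintype n] (hU : Uᵀ * U = 1) :
    Uᵀ * (1 - U * Uᵀ) = 0 := by
  rw [Matrix.mul_sub, Matrix.mul_one, ← Matrix.mul_assoc, hU, Matrix.one_mul, sub_self]

lemma one_sub_mul_transpose_mul_self_idem [Fintype n] (hU : Uᵀ * U = 1) :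
    (1 - U * Uᵀ) * (1 - U * Uᵀ) = 1 - U * Uᵀ := by
  rw [Matrix.mul_sub, Matrix.mul_one, ← Matrix.mul_assoc, one_sub_mul_transpose_mul_self hU,
    Matrix.zero_mul, sub_zero]

lemma colSpaceDiag_mul_colSpaceDiag [Fintype n] (hU : Uᵀ * U = 1) (r s : R) (f g : m → R) :
    colSpaceDiag U r f * colSpaceDiag U s g = colSpaceDiag U (r * s) (f * g) := by
  have hPU := one_sub_mul_transpose_mul_self hU
  have hUP := transpose_mul_one_sub_mul_transpose hU
  have hPP := one_sub_mul_transpose_mul_self_idem hU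
  have hPD : (1 - U * Uᵀ) * (U * diagonal g * Uᵀ) = 0 := by
    rw [← Matrix.mul_assoc, ← Matrix.mul_assoc, hPU, Matrix.zero_mul, Matrix.zero_mul]
  have hDP : U * diagonal f * Uᵀ * (1 - U * Uᵀ) = 0 := by
    rw [Matrix.mul_assoc, hUP, Matrix.mul_zero]
  have hDD : U * diagonal f * Uᵀ * (U * diagonal g * Uᵀ) = U * diagonal (f * g) * Uᵀ := by
    rw [Matrix.mul_assoc, ← Matrix.mul_assoc Uᵀ, ← Matrix.mul_assoc Uᵀ, hU, Matrix.one_mul,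
      ← Matrix.mul_assoc, Matrix.mul_assoc U, diagonal_mul_diagonal]
    rfl
  simp only [colSpaceDiag, Matrix.add_mul, Matrix.mul_add, Matrix.smul_mul, Matrix.mul_smul,
    hPP, hPD, hDP, hDD, smul_zero, add_zero, zero_add, smul_smul, mul_comm s r]

lemma colSpaceDiag_one (U : Matrix n m R) : colSpaceDiag U 1 1 = 1 := by
  rw [colSpaceDiag, one_smul, Pi.one_def, diagonal_one, Matrix.mul_one, sub_add_cancel]

lemma smul_one_add_smul_eq_colSpaceDiag (U : Matrix n m R) (c a : R) (d : m → R) :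
    c • 1 + a • (U * diagonal d * Uᵀ) = colSpaceDiag U c (fun i => c + a * d i) := by
  have hdiag : diagonal (fun i => c + a * d i) = c • 1 + a • diagonal d := by
    ext i j
    by_cases h : i = j <;> simp [h]
  rw [colSpaceDiag, hdiag, Matrix.mul_add, Matrix.add_mul, Matrix.mul_smul, Matrix.smul_mul,
    Matrix.mul_one, Matrix.mul_smul, Matrix.smul_mul, smul_sub]
  abel

lemma trace_colSpaceDiag_mul [Fintype n] (U : Matrix n m R) (r : R) (f : m → R)
    (S : Matrix n n R) :
    (colSpaceDiag U r f * S).trace =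
      r * (S.trace - (Uᵀ * S * U).trace) + (diagonal f * (Uᵀ * S * U)).trace := by
  have hP : (U * Uᵀ * S).trace = (Uᵀ * S * U).trace := by
    rw [Matrix.mul_assoc, trace_mul_comm]
  have hD : (U * diagonal f * Uᵀ * S).trace = (diagonal f * (Uᵀ * S * U)).trace := by
    rw [Matrix.mul_assoc, Matrix.mul_assoc, trace_mul_comm, Matrix.mul_assoc]
  rw [colSpaceDiag, Matrix.add_mul, trace_add, Matrix.smul_mul, trace_smul, Matrix.sub_mul,
    Matrix.one_mul, trace_sub, smul_eq_mul, hP, hD]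

end CommRing

variable [Fintype n] {U : Matrix n m ℝ}

lemma colSpaceDiag_posSemidef (hU : Uᵀ * U = 1) {r : ℝ} (hr : 0 ≤ r) {f : m → ℝ} (hf : 0 ≤ f) :
    (colSpaceDiag U r f).PosSemidef := by
  have hP : (1 - U * Uᵀ).PosSemidef := by
    have h := posSemidef_conjTranspose_mul_self (1 - U * Uᵀ)
    rwa [conjTranspose_eq_transpose_of_trivial, transpose_sub, transpose_one, transpose_mul,
      transpose_transpose, one_sub_mul_transpose_mul_self_idem hU] at h
  have hD : (U * diagonal f * Uᵀ).PosSemidef := by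
    simpa using (PosSemidef.diagonal hf).mul_mul_conjTranspose_same U
  exact (hP.smul hr).add hD

lemma matSqrt_colSpaceDiag (hU : Uᵀ * U = 1) {r : ℝ} (hr : 0 ≤ r) {f : m → ℝ} (hf : 0 ≤ f) :
    matSqrt (colSpaceDiag U r f) = colSpaceDiag U (√r) (fun i => √(f i)) := by
  refine matSqrt_eq_of_mul_self (colSpaceDiag_posSemidef hU hr hf)
    (colSpaceDiag_posSemidef hU (Real.sqrt_nonneg r) fun i => Real.sqrt_nonneg (f i)) ?_
  rw [colSpaceDiag_mul_colSpaceDiag hU, Real.mul_self_sqrt hr]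
  congr
  exact funext fun i => Real.mul_self_sqrt (hf i)

lemma matInvSqrt_colSpaceDiag (hU : Uᵀ * U = 1) {r : ℝ} (hr : 0 < r) {f : m → ℝ}
    (hf : ∀ i, 0 < f i) :
    matInvSqrt (colSpaceDiag U r f) = colSpaceDiag U (√r)⁻¹ (fun i => (√(f i))⁻¹) := by
  rw [matInvSqrt, matSqrt_colSpaceDiag hU hr.le fun i => (hf i).le]
  refine inv_eq_right_inv ?_
  rw [colSpaceDiag_mul_colSpaceDiag hU, mul_inv_cancel₀ (Real.sqrt_pos.2 hr).ne']
  convert colSpaceDiag_one U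
  exact funext fun i => mul_inv_cancel₀ (Real.sqrt_pos.2 (hf i)).ne'

end ColSpaceDiag

lemma Matrix.PosSemidef.trace_diagonal_mul_nonneg {R n : Type*} [Fintype n] [DecidableEq n]
    [CommRing R] [PartialOrder R] [StarRing R] [IsOrderedRing R] {B : Matrix n n R}
    (hB : B.PosSemidef) {f : n → R} (hf : 0 ≤ f) : 0 ≤ (diagonal f * B).trace :=
  Finset.sum_nonneg fun i _ => by simpa [diagonal_mul] using mul_nonneg (hf i) hB.diag_nonneg

theorem trace_invsqrt_low_rank_lower_bound_general
    (p M : ℕ)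
    (U : Matrix (Fin p) (Fin M) ℝ) (hU : Uᵀ * U = 1)
    (d : Fin M → ℝ) (hd : ∀ i, 0 ≤ d i) (c a : ℝ) (hc : 0 < c) (ha : 0 ≤ a)
    (Sbar : Matrix (Fin p) (Fin p) ℝ) (hSbar : Sbar.PosSemidef) :
    (matInvSqrt (c • (1 : Matrix (Fin p) (Fin p) ℝ) + a • (U * diagonal d * Uᵀ)) *
        Sbar).trace ≥ (Real.sqrt c)⁻¹ * (Sbar.trace - (Uᵀ * Sbar * U).trace) ∧
      (Real.sqrt c)⁻¹ * (Sbar.trace - (Uᵀ * Sbar * U).trace) ≥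
        (Real.sqrt c)⁻¹ * (Sbar.trace - (M : ℝ) * ‖Sbar‖) := by
  have hpos : ∀ i, 0 < c + a * d i := fun i => by have := hd i; positivity
  rw [smul_one_add_smul_eq_colSpaceDiag, matInvSqrt_colSpaceDiag hU hc hpos,
    trace_colSpaceDiag_mul]
  constructor
  · have hB : (Uᵀ * Sbar * U).PosSemidef := by
      simpa using hSbar.conjTranspose_mul_mul_same U
    exact le_add_of_nonneg_right <| hB.trace_diagonal_mul_nonneg fun i => by
      have := hpos i; positivity
  · have h := trace_transpose_mul_mul_le hU Sbar
    rw [Fintype.card_fin] at h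
    gcongr

/-- For `U` a `p×M` matrix with orthonormal columns, `Λ = diagonal d` with
`d ≥ 0`, `c > 0`, `a ≥ 0`, and `Σ̄` symmetric positive semidefinite,
`tr((c·I_p + a·U Λ Uᵀ)^{−1/2}·Σ̄) ≥ c^{−1/2}·(tr Σ̄ − tr(Uᵀ Σ̄ U)) ≥ c^{−1/2}·(tr Σ̄ − M·‖Σ̄‖)`. -/
theorem trace_invsqrt_low_rank_lower_bound
    (p M : ℕ) (hM : 1 ≤ M) (hMp : M ≤ p)
    (U : Matrix (Fin p) (Fin M) ℝ) (hU : Uᵀ * U = 1)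
    (d : Fin M → ℝ) (hd : ∀ i, 0 ≤ d i) (c a : ℝ) (hc : 0 < c) (ha : 0 ≤ a)
    (Sbar : Matrix (Fin p) (Fin p) ℝ) (hSbar : Sbar.PosSemidef) :
    (matInvSqrt (c • (1 : Matrix (Fin p) (Fin p) ℝ) + a • (U * diagonal d * Uᵀ)) *
        Sbar).trace ≥ (Real.sqrt c)⁻¹ * (Sbar.trace - (Uᵀ * Sbar * U).trace) ∧
      (Real.sqrt c)⁻¹ * (Sbar.trace - (Uᵀ * Sbar * U).trace) ≥
        (Real.sqrt c)⁻¹ * (Sbar.trace - (M : ℝ) * ‖Sbar‖) :=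
  trace_invsqrt_low_rank_lower_bound_general p M U hU d hd c a hc ha Sbar hSbar
end

section
/- Let X and S be p×p real symmetric positive semidefinite matrices. Then |tr(S^{1/2}·(X^{1/2} − I_p)·S^{1/2})| ≤ ‖S‖·√(p·tr((X − I_p)²)). -/
open Matrix
open scoped Matrix.Norms.L2Operator

/-- The positive semidefinite square root of a positive semidefinite matrix (the definition
`Matrix.PosSemidef.sqrt` of the older Mathlib, removed since). -/
noncomputable def Matrix.PosSemidef.sqrt {n 𝕜 : Type*} [Fintype n] [RCLike 𝕜] [PartialOrder 𝕜]
    [DecidableEq n] {A : Matrix n n 𝕜} (hA : A.PosSemidef) : Matrix n n 𝕜 :=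
  hA.1.eigenvectorUnitary.1 * diagonal ((↑) ∘ (√·) ∘ hA.1.eigenvalues) *
    (star hA.1.eigenvectorUnitary : Matrix n n 𝕜)

/-! Diagonalise `X = U diag(λ) Uᵀ`. As `S^{1/2} S^{1/2} = S`, the trace is
`∑ᵢ (UᵀSU)ᵢᵢ (√λᵢ - 1)`, and every diagonal entry of `UᵀSU` is bounded by `‖UᵀSU‖ = ‖S‖`.
Cauchy–Schwarz bounds `∑ᵢ |√λᵢ - 1|` by `√(p ∑ᵢ (√λᵢ - 1)²)`, and
`tr((X - I)²) = ∑ᵢ (λᵢ - 1)²` with `|√λ - 1| ≤ |λ - 1|` for `λ ≥ 0`. -/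

theorem Real.abs_sqrt_sub_one_le_abs_sub_one {x : ℝ} (hx : 0 ≤ x) : |√x - 1| ≤ |x - 1| := by
  have hfactor : x - 1 = (√x - 1) * (√x + 1) := by
    linear_combination -Real.sq_sqrt hx
  rw [hfactor, abs_mul, abs_of_nonneg (by positivity : 0 ≤ √x + 1)]
  exact le_mul_of_one_le_right (abs_nonneg _) (by linarith [Real.sqrt_nonneg x])

theorem abs_sum_mul_le_mul_sqrt_card_mul_sum_sq {ι : Type*} [Fintype ι] {t a : ι → ℝ} {C : ℝ}
    (hC : 0 ≤ C) (ht : ∀ i, |t i| ≤ C) :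
    |∑ i, t i * a i| ≤ C * √(Fintype.card ι * ∑ i, a i ^ 2) := by
  have hCauchySchwarz : ∑ i, |a i| ≤ √(Fintype.card ι * ∑ i, a i ^ 2) := by
    refine Real.le_sqrt_of_sq_le ?_
    simpa [sq_abs] using sq_sum_le_card_mul_sum_sq (s := Finset.univ) (f := fun i => |a i|)
  calc |∑ i, t i * a i| ≤ ∑ i, |t i| * |a i| := by
        simpa only [abs_mul] using Finset.abs_sum_le_sum_abs (fun i => t i * a i) Finset.univ
    _ ≤ ∑ i, C * |a i| := by gcongr with i; exact ht i
    _ = C * ∑ i, |a i| := (Finset.mul_sum ..).symm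
    _ ≤ C * √(Fintype.card ι * ∑ i, a i ^ 2) := by gcongr

namespace Matrix

variable {n 𝕜 : Type*} [Fintype n] [DecidableEq n] [RCLike 𝕜]

theorem l2_opNorm_apply_le (M : Matrix n n 𝕜) (i j : n) : ‖M i j‖ ≤ ‖M‖ := by
  calc ‖M i j‖ = ‖(EuclideanSpace.equiv n 𝕜).symm (M *ᵥ Pi.single j 1) i‖ := by simp
    _ ≤ _ := PiLp.norm_apply_le _ i
    _ ≤ ‖M‖ := by simpa using M.l2_opNorm_mulVec (EuclideanSpace.single j 1)

theorem l2_opNorm_star_mul_mul_unitary (M : Matrix n n 𝕜) (U : unitary (Matrix n n 𝕜)) :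
    ‖(star U : Matrix n n 𝕜) * M * U‖ = ‖M‖ := by
  rw [CStarRing.norm_mul_coe_unitary, ← Unitary.coe_star, CStarRing.norm_coe_unitary_mul]

theorem IsHermitian.trace_mul_cfc {A : Matrix n n 𝕜} (hA : A.IsHermitian) (B : Matrix n n 𝕜)
    (f : ℝ → ℝ) :
    (B * cfc f A).trace =
      ∑ i, ((star hA.eigenvectorUnitary : Matrix n n 𝕜) * B * hA.eigenvectorUnitary) i i *
        f (hA.eigenvalues i) := by
  rw [hA.cfc_eq, IsHermitian.cfc, Unitary.conjStarAlgAut_apply, ← Matrix.mul_assoc,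
    ← Matrix.mul_assoc, trace_mul_cycle, ← Matrix.mul_assoc]
  simp [trace, mul_diagonal]

theorem IsHermitian.trace_cfc {A : Matrix n n 𝕜} (hA : A.IsHermitian) (f : ℝ → ℝ) :
    (cfc f A).trace = ∑ i, (f (hA.eigenvalues i) : 𝕜) := by
  simpa using hA.trace_mul_cfc 1 f

theorem PosSemidef.sqrt_eq_cfc [PartialOrder 𝕜] {A : Matrix n n 𝕜} (hA : A.PosSemidef) :
    hA.sqrt = cfc Real.sqrt A := by
  rw [hA.1.cfc_eq, IsHermitian.cfc, Unitary.conjStarAlgAut_apply]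
  rfl

open scoped ComplexOrder in
theorem PosSemidef.sqrt_mul_self {A : Matrix n n 𝕜} (hA : A.PosSemidef) :
    hA.sqrt * hA.sqrt = A := by
  rw [hA.sqrt_eq_cfc, ← cfc_mul ..]
  conv_rhs => rw [← cfc_id' ℝ A hA.1]
  refine cfc_congr fun x hx => ?_
  obtain ⟨i, rfl⟩ := hA.1.spectrum_real_eq_range_eigenvalues ▸ hx
  exact Real.mul_self_sqrt (hA.eigenvalues_nonneg i)

end Matrix

/-- For symmetric positive semidefinite `X` and `S`,
`|tr(S^{1/2}·(X^{1/2} − I)·S^{1/2})| ≤ ‖S‖·√(p·tr((X − I)²))`. -/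
theorem trace_sqrt_perturbation_bound
    (p : ℕ) {X S : Matrix (Fin p) (Fin p) ℝ}
    (hX : X.PosSemidef) (hS : S.PosSemidef) :
    |(hS.sqrt * (hX.sqrt - 1) * hS.sqrt).trace| ≤
      ‖S‖ * Real.sqrt ((p : ℝ) * ((X - 1) * (X - 1)).trace) := by
  set U := hX.isHermitian.eigenvectorUnitary
  set ev := hX.isHermitian.eigenvalues
  have hdiag (i : Fin p) : |((star U : Matrix (Fin p) (Fin p) ℝ) * S * U) i i| ≤ ‖S‖ :=
    (l2_opNorm_apply_le _ i i).trans_eq (l2_opNorm_star_mul_mul_unitary S U)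
  have hXsa : IsSelfAdjoint X := hX.isHermitian
  have hsqrt_sub : hX.sqrt - 1 = cfc (fun x => √x - 1) X := by
    rw [cfc_sub .., cfc_const_one ℝ X, hX.sqrt_eq_cfc]
  have hsub_sq : (X - 1) * (X - 1) = cfc (fun x : ℝ => (x - 1) ^ 2) X := by
    rw [cfc_pow .., cfc_sub .., cfc_id' ℝ X, cfc_const_one ℝ X, sq]
  have hlhs : (hS.sqrt * (hX.sqrt - 1) * hS.sqrt).trace =
      ∑ i, ((star U : Matrix (Fin p) (Fin p) ℝ) * S * U) i i * (√(ev i) - 1) := by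
    rw [trace_mul_cycle, hS.sqrt_mul_self, hsqrt_sub]
    exact hX.isHermitian.trace_mul_cfc S _
  have hrhs : ((X - 1) * (X - 1)).trace = ∑ i, (ev i - 1) ^ 2 := by
    rw [hsub_sq]
    exact hX.isHermitian.trace_cfc _
  have heigen : ∑ i, (√(ev i) - 1) ^ 2 ≤ ∑ i, (ev i - 1) ^ 2 := Finset.sum_le_sum fun i _ =>
    sq_le_sq.2 (Real.abs_sqrt_sub_one_le_abs_sub_one (hX.eigenvalues_nonneg i))
  rw [hlhs, hrhs]
  calc _ ≤ ‖S‖ * √(p * ∑ i, (√(ev i) - 1) ^ 2) := by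
        simpa using abs_sum_mul_le_mul_sqrt_card_mul_sum_sq (norm_nonneg S) hdiag
    _ ≤ _ := by gcongr
end
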